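/- Suppose f = h + conj(g) is a harmonic entire mapping where h and g have equal finite positive order ρ_h = ρ_g = ρ, and let τ, τ_h, τ_g denote the types (of order ρ) of f, h, g respectively. Then τ = max{τ_h, τ_g}. -/

import Mathlib

/-!
On a circle `|z| = R` we have `conj z = R² / z`, so `z ↦ conj (g z)` agrees there with a function
that is holomorphic outside the disc and tends to `conj (g 0) = 0` at infinity; its Cauchy
integral therefore vanishes, and the Cauchy formula for `f = h + conj g` reproduces `h`. This gives
`M_h(r) ≤ R/(R-r) M_f(R)` and, applied to `conj f - conj (h 0)`, the same bound for `g` up to the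
constant `‖h 0‖`. Taking `R = k r` with `k` close to `1` shows `τ_h, τ_g ≤ τ_f`, while
`M_f ≤ M_h + M_g` gives `τ_f ≤ max τ_h τ_g`. All these types are nonnegative, which is what lets
one pass between a type and the bounds `M(r) ≤ exp (c r^ρ)`.
-/

open Filter

/-- Maximum modulus of `F` on the circle `|z| = r`. -/
noncomputable def maxMod (F : ℂ → ℂ) (r : ℝ) : ℝ :=
  sSup ((fun z => ‖F z‖) '' Metric.sphere (0 : ℂ) r)

/-- Order of a (harmonic) entire mapping. -/
noncomputable def hOrder (F : ℂ → ℂ) : EReal :=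
  limsup (fun r : ℝ => ((Real.log (Real.log (maxMod F r)) / Real.log r : ℝ) : EReal)) atTop

/-- Type, of order `ρ`, of a (harmonic) entire mapping. -/
noncomputable def hType (F : ℂ → ℂ) (ρ : ℝ) : EReal :=
  limsup (fun r : ℝ => ((Real.log (maxMod F r) / r ^ ρ : ℝ) : EReal)) atTop

open Topology Metric Real ComplexConjugate Bornology

lemma maxMod_nonneg (F : ℂ → ℂ) (r : ℝ) : 0 ≤ maxMod F r :=
  Real.sSup_nonneg (by rintro _ ⟨z, _, rfl⟩; exact norm_nonneg _)

lemma norm_le_maxMod {F : ℂ → ℂ} (hF : Continuous F) {r : ℝ} {z : ℂ}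
    (hz : z ∈ sphere (0 : ℂ) r) : ‖F z‖ ≤ maxMod F r :=
  le_csSup ((isCompact_sphere 0 r).image (continuous_norm.comp hF)).bddAbove ⟨z, hz, rfl⟩

lemma maxMod_le {F : ℂ → ℂ} {r a : ℝ} (ha : 0 ≤ a) (h : ∀ z ∈ sphere (0 : ℂ) r, ‖F z‖ ≤ a) :
    maxMod F r ≤ a :=
  Real.sSup_le (by rintro _ ⟨z, hz, rfl⟩; exact h z hz) ha

lemma maxMod_add_conj_le {h g : ℂ → ℂ} (hh : Continuous h) (hg : Continuous g) (r : ℝ) :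
    maxMod (fun z => h z + conj (g z)) r ≤ maxMod h r + maxMod g r :=
  maxMod_le (add_nonneg (maxMod_nonneg h r) (maxMod_nonneg g r)) fun z hz =>
    calc ‖h z + conj (g z)‖ ≤ ‖h z‖ + ‖g z‖ :=
          (norm_add_le _ _).trans_eq (by rw [Complex.norm_conj])
      _ ≤ maxMod h r + maxMod g r := add_le_add (norm_le_maxMod hh hz) (norm_le_maxMod hg hz)

section

variable {F : ℂ → ℂ} {ρ : ℝ}

lemma eventually_maxMod_le_exp_of_hType_lt {c : ℝ} (h : hType F ρ < c) :
    ∀ᶠ r in atTop, maxMod F r ≤ exp (c * r ^ ρ) := by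
  filter_upwards [eventually_lt_of_limsup_lt h, eventually_gt_atTop 0] with r hr hr0
  have hr : log (maxMod F r) / r ^ ρ < c := by exact_mod_cast hr
  exact le_exp_of_log_le ((div_le_iff₀ (rpow_pos_of_pos hr0 ρ)).1 hr.le)

/-- Since `log 0 = 0`, a vanishing `maxMod` gives `log (maxMod F r) ≤ c * r ^ ρ` only for
`c ≥ 0`. -/
lemma hType_le_of_eventually_maxMod_le_exp {y : EReal} (hy : 0 ≤ y)
    (h : ∀ c : ℝ, y < c → ∀ᶠ r in atTop, maxMod F r ≤ exp (c * r ^ ρ)) : hType F ρ ≤ y := by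
  unfold hType
  refine (limsup_le_iff' ..).2 fun y' hy' => ?_
  obtain ⟨c, hyc, hcy'⟩ := EReal.exists_between_coe_real hy'
  have hc : (0 : ℝ) < c := by exact_mod_cast hy.trans_lt hyc
  filter_upwards [h c hyc, eventually_gt_atTop 0] with r hr hr0
  have hlog : log (maxMod F r) ≤ c * r ^ ρ := by
    rcases (maxMod_nonneg F r).eq_or_lt with h0 | hpos
    · rw [← h0, log_zero]; positivity
    · exact (log_le_iff_le_exp hpos).2 hr
  refine le_trans ?_ hcy'.le
  exact_mod_cast (div_le_iff₀ (rpow_pos_of_pos hr0 ρ)).2 hlog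

lemma hType_nonneg_of_eventually_le_log_maxMod (hρ : 0 < ρ) (a : ℝ)
    (h : ∀ᶠ r in atTop, a ≤ log (maxMod F r)) : 0 ≤ hType F ρ := by
  have hlim : Tendsto (fun r : ℝ => ((a / r ^ ρ : ℝ) : EReal)) atTop (𝓝 0) :=
    EReal.tendsto_coe.2 (tendsto_const_nhds.div_atTop (tendsto_rpow_atTop hρ))
  rw [← hlim.limsup_eq]
  refine limsup_le_limsup ?_
  filter_upwards [h, eventually_gt_atTop 0] with r hr hr0
  exact_mod_cast div_le_div_of_nonneg_right hr (rpow_pos_of_pos hr0 ρ).le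

end

lemma eventually_mul_exp_add_le_exp {ρ a b : ℝ} (hρ : 0 < ρ) (ha : 0 ≤ a) (hab : a < b)
    (K A : ℝ) : ∀ᶠ r in atTop, K * exp (a * r ^ ρ) + A ≤ exp (b * r ^ ρ) := by
  have hgrow : Tendsto (fun r : ℝ => exp ((b - a) * r ^ ρ)) atTop atTop :=
    tendsto_exp_atTop.comp ((tendsto_rpow_atTop hρ).const_mul_atTop (sub_pos.2 hab))
  filter_upwards [hgrow.eventually_ge_atTop (|K| + |A|), eventually_ge_atTop 0] with r hr hr0
  have h1 : 1 ≤ exp (a * r ^ ρ) := one_le_exp (by positivity)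
  calc K * exp (a * r ^ ρ) + A ≤ (|K| + |A|) * exp (a * r ^ ρ) := by
        nlinarith [le_abs_self K, le_abs_self A, abs_nonneg A]
    _ ≤ exp ((b - a) * r ^ ρ) * exp (a * r ^ ρ) := by gcongr
    _ = exp (b * r ^ ρ) := by rw [← exp_add]; ring_nf

lemma exists_one_lt_mul_rpow_lt {a b : ℝ} (ρ : ℝ) (hab : a < b) : ∃ k, 1 < k ∧ a * k ^ ρ < b := by
  have hcont : Tendsto (fun x : ℝ => a * x ^ ρ) (𝓝[>] 1) (𝓝 (a * 1 ^ ρ)) :=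
    ((continuousAt_rpow_const 1 ρ (Or.inl one_ne_zero)).tendsto.const_mul a).mono_left
      nhdsWithin_le_nhds
  rw [one_rpow, mul_one] at hcont
  obtain ⟨k, hk, hk1⟩ := ((hcont.eventually (gt_mem_nhds hab)).and self_mem_nhdsWithin).exists
  exact ⟨k, hk1, hk⟩

lemma hType_le_max_of_maxMod_le_add {F G₁ G₂ : ℂ → ℂ} {ρ : ℝ} (hρ : 0 < ρ)
    (hG₁ : 0 ≤ hType G₁ ρ) (hle : ∀ r, maxMod F r ≤ maxMod G₁ r + maxMod G₂ r) :
    hType F ρ ≤ max (hType G₁ ρ) (hType G₂ ρ) := by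
  have hmax := hG₁.trans (le_max_left _ (hType G₂ ρ))
  refine hType_le_of_eventually_maxMod_le_exp hmax fun c hc => ?_
  obtain ⟨c', hc', hc'c⟩ := EReal.exists_between_coe_real hc
  have hc'0 : (0 : ℝ) ≤ c' := by exact_mod_cast hmax.trans hc'.le
  filter_upwards [eventually_maxMod_le_exp_of_hType_lt ((le_max_left _ _).trans_lt hc'),
    eventually_maxMod_le_exp_of_hType_lt ((le_max_right _ _).trans_lt hc'),
    eventually_mul_exp_add_le_exp hρ hc'0 (EReal.coe_lt_coe_iff.1 hc'c) 2 0] with r h₁ h₂ h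
  linarith [hle r]

/-- The form of the Cauchy estimate for maximum moduli. -/
def MaxModDominated (F G : ℂ → ℂ) (A : ℝ) : Prop :=
  ∀ r R : ℝ, 0 ≤ r → r < R → maxMod F r ≤ R / (R - r) * (maxMod G R + A)

namespace MaxModDominated

variable {F G : ℂ → ℂ} {A : ℝ}

lemma hType_le (hFG : MaxModDominated F G A) {ρ : ℝ} (hρ : 0 < ρ) (hG : 0 ≤ hType G ρ) :
    hType F ρ ≤ hType G ρ := by
  refine hType_le_of_eventually_maxMod_le_exp hG fun c hc => ?_
  obtain ⟨c', hc', hc'c⟩ := EReal.exists_between_coe_real hc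
  have hc'0 : (0 : ℝ) ≤ c' := by exact_mod_cast hG.trans hc'.le
  obtain ⟨k, hk, hkc⟩ := exists_one_lt_mul_rpow_lt ρ (EReal.coe_lt_coe_iff.1 hc'c)
  have hGk : ∀ᶠ r in atTop, maxMod G (k * r) ≤ exp (c' * k ^ ρ * r ^ ρ) := by
    filter_upwards [(tendsto_id.const_mul_atTop (show (0 : ℝ) < k by linarith)).eventually
      (eventually_maxMod_le_exp_of_hType_lt hc'), eventually_ge_atTop 0] with r hr hr0
    rwa [id, mul_rpow (by linarith) hr0, ← mul_assoc] at hr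
  filter_upwards [hGk, eventually_mul_exp_add_le_exp hρ (by positivity) hkc (k / (k - 1))
    (k / (k - 1) * A), eventually_gt_atTop 0] with r hr hexp hr0
  have hratio : k * r / (k * r - r) = k / (k - 1) := by
    rw [show k * r - r = (k - 1) * r by ring, mul_div_mul_right _ _ hr0.ne']
  have hK : 0 ≤ k / (k - 1) := div_nonneg (by linarith) (by linarith)
  calc maxMod F r ≤ k / (k - 1) * (maxMod G (k * r) + A) := by
        simpa only [hratio] using hFG r (k * r) hr0.le (by nlinarith)
    _ ≤ k / (k - 1) * exp (c' * k ^ ρ * r ^ ρ) + k / (k - 1) * A := by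
        rw [mul_add]; gcongr
    _ ≤ exp (c * r ^ ρ) := hexp

lemma eventually_le_log_maxMod (hFG : MaxModDominated F G 0) (hF : Continuous F) {w : ℂ}
    (hw : F w ≠ 0) : ∀ᶠ R in atTop, log (‖F w‖ / 2) ≤ log (maxMod G R) := by
  filter_upwards [eventually_gt_atTop (2 * ‖w‖)] with R hR
  have hwR : ‖w‖ < R := by linarith [norm_nonneg w]
  have hle := (norm_le_maxMod hF (mem_sphere_zero_iff_norm.2 rfl)).trans
    (hFG _ R (norm_nonneg w) hwR)
  rw [add_zero] at hle
  have hratio : R / (R - ‖w‖) ≤ 2 := by rw [div_le_iff₀ (by linarith)]; linarith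
  apply log_le_log (by positivity)
  nlinarith [maxMod_nonneg G R]

end MaxModDominated

lemma circleIntegral_eq_zero_of_tendsto_smul {E : Type*} [NormedAddCommGroup E]
    [NormedSpace ℂ E] [CompleteSpace E] {Φ : ℂ → E} {R : ℝ} (hR : 0 < R)
    (hd : ∀ z : ℂ, R ≤ ‖z‖ → DifferentiableAt ℂ Φ z)
    (hlim : Tendsto (fun z => z • Φ z) (cobounded ℂ) (𝓝 0)) :
    (∮ z in C(0, R), Φ z) = 0 := by
  -- all the integrals over `C(0, S)`, `S ≥ R`, agree, and they are `O(sup_{|z| = S} ‖z • Φ z‖)`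
  have hS : ∀ S, R ≤ S → (∮ z in C(0, S), Φ z) = ∮ z in C(0, R), Φ z := fun S hS =>
    Complex.circleIntegral_eq_of_differentiable_on_annulus_off_countable hR hS
      Set.countable_empty
      (fun z hz => (hd z (by simpa using hz.2)).continuousAt.continuousWithinAt)
      (fun z hz => hd z (by simpa using hz.1.2 : R < ‖z‖).le)
  refine norm_le_zero_iff.1 (le_of_forall_pos_le_add fun ε hε => ?_)
  obtain ⟨S₀, -, hS₀⟩ := hasBasis_cobounded_norm.eventually_iff.1
    (Metric.tendsto_nhds.1 hlim (ε / (2 * π)) (by positivity))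
  set S := max R S₀
  have hSR : R ≤ S := le_max_left _ _
  have hS0 : 0 < S := hR.trans_le hSR
  have hbound : ∀ z ∈ sphere (0 : ℂ) S, ‖Φ z‖ ≤ ε / (2 * π) / S := by
    intro z hz
    have hzS : ‖z‖ = S := mem_sphere_zero_iff_norm.1 hz
    have := hS₀ (hzS.trans_ge (le_max_right _ _))
    rw [dist_zero_right, norm_smul, hzS] at this
    rw [le_div_iff₀ hS0, mul_comm]
    exact this.le
  calc ‖∮ z in C(0, R), Φ z‖ = ‖∮ z in C(0, S), Φ z‖ := by rw [hS S hSR]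
    _ ≤ 2 * π * S * (ε / (2 * π) / S) :=
        circleIntegral.norm_integral_le_of_norm_le_const hS0.le hbound
    _ = 0 + ε := by field_simp; ring

lemma circleIntegral_sub_inv_smul_conj_eq_zero {g : ℂ → ℂ} (hg : Differentiable ℂ g)
    (hg0 : g 0 = 0) {R : ℝ} {w : ℂ} (hw : ‖w‖ < R) :
    (∮ z in C(0, R), (z - w)⁻¹ • conj (g z)) = 0 := by
  have hR : 0 < R := (norm_nonneg w).trans_lt hw
  set G : ℂ → ℂ := conj ∘ g ∘ conj
  have hG : Differentiable ℂ G := fun z => by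
    simpa only [Complex.conj_conj] using (hg (conj z)).conj_conj
  have hsphere : Set.EqOn (fun z => (z - w)⁻¹ • conj (g z))
      (fun z => (z - w)⁻¹ • G (R ^ 2 / z)) (sphere 0 R) := by
    intro z hz
    have hz0 : z ≠ 0 := ne_zero_of_mem_sphere hR.ne' ⟨z, hz⟩
    have : (R : ℂ) ^ 2 / z = conj z := by
      rw [div_eq_iff hz0, mul_comm, Complex.mul_conj, Complex.normSq_eq_norm_sq,
        mem_sphere_zero_iff_norm.1 hz]
      push_cast; ring
    simp [G, this]
  rw [circleIntegral.integral_congr hR.le hsphere]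
  refine circleIntegral_eq_zero_of_tendsto_smul hR (fun z hz => ?_) ?_
  · have hz0 : z ≠ 0 := norm_pos_iff.1 (hR.trans_le hz)
    have hzw : z - w ≠ 0 := sub_ne_zero.2 fun h => (hw.trans_le hz).ne (by rw [h])
    exact ((differentiableAt_id.sub_const w).inv hzw).smul
      (hG.differentiableAt.comp z ((differentiableAt_const _).div differentiableAt_id hz0))
  · have hinv : Tendsto (fun z : ℂ => (z - w)⁻¹) (cobounded ℂ) (𝓝 0) :=
      tendsto_inv₀_cobounded.comp (tendsto_sub_const_cobounded w)
    have hG0 : Tendsto (fun z : ℂ => G (R ^ 2 / z)) (cobounded ℂ) (𝓝 0) := by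
      have := (hG.continuous.tendsto 0).comp
        (by simpa using tendsto_inv₀_cobounded.const_mul ((R : ℂ) ^ 2))
      simpa [G, hg0, div_eq_mul_inv, Function.comp_def] using this
    have hmul := ((tendsto_const_nhds (x := (1 : ℂ))).add (hinv.const_mul w)).mul hG0
    rw [mul_zero] at hmul
    refine hmul.congr' ?_
    filter_upwards [eventually_ne_cobounded w] with z hz
    have hzw : z - w ≠ 0 := sub_ne_zero.2 hz
    simp only [smul_eq_mul]
    field_simp
    ring

lemma circleIntegrable_sub_inv_smul {F : ℂ → ℂ} (hF : Continuous F) {R : ℝ} {w : ℂ}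
    (hw : ‖w‖ < R) : CircleIntegrable (fun z => (z - w)⁻¹ • F z) 0 R := by
  have hR : 0 < R := (norm_nonneg w).trans_lt hw
  have hinv : ContinuousOn (fun z : ℂ => (z - w)⁻¹) (sphere 0 R) :=
    (continuousOn_id.sub continuousOn_const).inv₀ fun z hz => sub_ne_zero.2 <| by
      rintro rfl
      exact hw.ne (mem_sphere_zero_iff_norm.1 hz)
  exact (hinv.smul hF.continuousOn).circleIntegrable hR.le

lemma circleIntegral_sub_inv_smul_add_conj {h g : ℂ → ℂ} (hh : Differentiable ℂ h)
    (hg : Differentiable ℂ g) (hg0 : g 0 = 0) {R : ℝ} {w : ℂ} (hw : ‖w‖ < R) :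
    (∮ z in C(0, R), (z - w)⁻¹ • (h z + conj (g z))) = (2 * π * Complex.I) • h w := by
  simp_rw [smul_add]
  rw [circleIntegral.integral_add (circleIntegrable_sub_inv_smul hh.continuous hw)
    (circleIntegrable_sub_inv_smul (F := fun z => conj (g z))
      (Complex.continuous_conj.comp hg.continuous) hw),
    circleIntegral_sub_inv_smul_conj_eq_zero hg hg0 hw, add_zero]
  exact hh.diffContOnCl.circleIntegral_sub_inv_smul (by simpa using hw)

lemma maxModDominated_add_conj_left {h g : ℂ → ℂ} (hh : Differentiable ℂ h)
    (hg : Differentiable ℂ g) (hg0 : g 0 = 0) :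
    MaxModDominated h (fun z => h z + conj (g z)) 0 := by
  intro r R hr hrR
  set f : ℂ → ℂ := fun z => h z + conj (g z)
  have hf : Continuous f := hh.continuous.add (Complex.continuous_conj.comp hg.continuous)
  have hR : 0 < R := hr.trans_lt hrR
  rw [add_zero]
  refine maxMod_le (mul_nonneg (div_nonneg hR.le (by linarith)) (maxMod_nonneg f R))
    fun w hw => ?_
  have hwr : ‖w‖ = r := mem_sphere_zero_iff_norm.1 hw
  have hbound : ∀ z ∈ sphere (0 : ℂ) R, ‖(z - w)⁻¹ • f z‖ ≤ maxMod f R / (R - r) := by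
    intro z hz
    have hzw : R - r ≤ ‖z - w‖ := by
      simpa [mem_sphere_zero_iff_norm.1 hz, hwr] using norm_sub_norm_le z w
    rw [norm_smul, norm_inv, inv_mul_eq_div]
    exact div_le_div₀ (maxMod_nonneg f R) (norm_le_maxMod hf hz) (by linarith) hzw
  have hint := circleIntegral.norm_integral_le_of_norm_le_const hR.le hbound
  rw [circleIntegral_sub_inv_smul_add_conj hh hg hg0 (hwr ▸ hrR), norm_smul] at hint
  simp only [norm_mul, Complex.norm_ofNat, Complex.norm_real, Real.norm_eq_abs,
    abs_of_pos pi_pos, Complex.norm_I, mul_one] at hint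
  have hπ : 0 < 2 * π := by positivity
  calc ‖h w‖ ≤ R * (maxMod f R / (R - r)) := le_of_mul_le_mul_left (by linarith) hπ
    _ = R / (R - r) * maxMod f R := by ring

lemma maxModDominated_add_conj_right {h g : ℂ → ℂ} (hh : Differentiable ℂ h)
    (hg : Differentiable ℂ g) :
    MaxModDominated g (fun z => h z + conj (g z)) ‖h 0‖ := by
  intro r R hr hrR
  have hf : Continuous fun z => h z + conj (g z) :=
    hh.continuous.add (Complex.continuous_conj.comp hg.continuous)
  refine (maxModDominated_add_conj_left hg (hh.sub_const (h 0)) (sub_self _) r R hr hrR).trans ?_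
  rw [add_zero]
  have : 0 ≤ R / (R - r) := div_nonneg (by linarith) (by linarith)
  gcongr
  refine maxMod_le (add_nonneg (maxMod_nonneg _ R) (norm_nonneg _)) fun z hz => ?_
  calc ‖g z + conj (h z - h 0)‖ = ‖h z + conj (g z) - h 0‖ := by
        rw [← Complex.norm_conj]; simp only [map_add, map_sub, Complex.conj_conj]; ring_nf
    _ ≤ ‖h z + conj (g z)‖ + ‖h 0‖ := norm_sub_le _ _
    _ ≤ _ := by gcongr; exact norm_le_maxMod hf hz

lemma hType_add_conj_nonneg {h g : ℂ → ℂ} (hh : Differentiable ℂ h)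
    (hg : Differentiable ℂ g) (hg0 : g 0 = 0) {ρ : ℝ} (hρ : 0 < ρ) :
    0 ≤ hType (fun z => h z + conj (g z)) ρ := by
  by_cases hh0 : ∃ w, h w ≠ 0
  · obtain ⟨w, hw⟩ := hh0
    exact hType_nonneg_of_eventually_le_log_maxMod hρ _
      ((maxModDominated_add_conj_left hh hg hg0).eventually_le_log_maxMod hh.continuous hw)
  push Not at hh0
  by_cases hg0' : ∃ w, g w ≠ 0
  · obtain ⟨w, hw⟩ := hg0'
    have hdom := maxModDominated_add_conj_right hh hg
    rw [hh0 0, norm_zero] at hdom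
    exact hType_nonneg_of_eventually_le_log_maxMod hρ _
      (hdom.eventually_le_log_maxMod hg.continuous hw)
  push Not at hg0'
  refine hType_nonneg_of_eventually_le_log_maxMod hρ 0 (Eventually.of_forall fun R => ?_)
  rw [le_antisymm (maxMod_le le_rfl fun z _ => by simp [hh0, hg0']) (maxMod_nonneg _ _), log_zero]

theorem type_eq_max_of_equal_orders_general (h g : ℂ → ℂ)
    (hh : Differentiable ℂ h) (hg : Differentiable ℂ g) (hg0 : g 0 = 0)
    (ρ : ℝ) (hρ : 0 < ρ) :
    hType (fun z => h z + starRingEnd ℂ (g z)) ρ = max (hType h ρ) (hType g ρ) := by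
  have hτf : 0 ≤ hType (fun z => h z + conj (g z)) ρ := hType_add_conj_nonneg hh hg hg0 hρ
  have hτh : 0 ≤ hType h ρ := by
    simpa using hType_add_conj_nonneg hh (differentiable_const 0) rfl hρ
  refine le_antisymm (hType_le_max_of_maxMod_le_add hρ hτh
    (maxMod_add_conj_le hh.continuous hg.continuous)) (max_le ?_ ?_)
  · exact (maxModDominated_add_conj_left hh hg hg0).hType_le hρ hτf
  · exact (maxModDominated_add_conj_right hh hg).hType_le hρ hτf

theorem type_eq_max_of_equal_orders (h g : ℂ → ℂ)
    (hh : Differentiable ℂ h) (hg : Differentiable ℂ g) (hg0 : g 0 = 0)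
    (ρ : ℝ) (hρ : 0 < ρ)
    (hoh : hOrder h = (ρ : EReal)) (hog : hOrder g = (ρ : EReal)) :
    hType (fun z => h z + starRingEnd ℂ (g z)) ρ = max (hType h ρ) (hType g ρ) :=
  type_eq_max_of_equal_orders_general h g hh hg hg0 ρ hρ
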